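/- arXiv:quant-ph/0512199 — 2 statements merged into one kernel-verified Lean document; each statement's English description precedes it below -/
import Mathlib

section
/- If a density matrix ρ on ℂ^m ⊗ ℂ^n is separable, i.e., ρ = Σ_{j=1}^M p_j (σ_j ⊗ τ_j) with p_j > 0, Σ p_j = 1, and σ_j, τ_j density matrices, then rank(Tr_V ρ) ≤ rank(ρ). -/
open ComplexOrder Matrix Kronecker

lemma kron_conjTranspose {m n : Type*} (A : Matrix m m ℂ) (B : Matrix n n ℂ) :
    (A ⊗ₖ B)ᴴ = Aᴴ ⊗ₖ Bᴴ := by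
  ext ⟨i, j⟩ ⟨k, l⟩
  simp [conjTranspose_apply, kroneckerMap_apply, mul_comm]

lemma kron_posSemidef {m n : Type*} [Fintype m] [Fintype n] [DecidableEq m] [DecidableEq n]
    {A : Matrix m m ℂ} {B : Matrix n n ℂ} (hA : A.PosSemidef) (hB : B.PosSemidef) :
    (A ⊗ₖ B).PosSemidef := by
  obtain ⟨C, rfl⟩ : ∃ C : Matrix m m ℂ, A = Cᴴ * C := by
    open scoped MatrixOrder Matrix.Norms.L2Operator in
    exact CStarAlgebra.nonneg_iff_eq_star_mul_self.mp hA.nonneg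
  obtain ⟨D, rfl⟩ : ∃ D : Matrix n n ℂ, B = Dᴴ * D := by
    open scoped MatrixOrder Matrix.Norms.L2Operator in
    exact CStarAlgebra.nonneg_iff_eq_star_mul_self.mp hB.nonneg
  have : (Cᴴ * C) ⊗ₖ (Dᴴ * D) = (C ⊗ₖ D)ᴴ * (C ⊗ₖ D) := by
    rw [Matrix.mul_kronecker_mul, kron_conjTranspose]
  rw [this]
  exact posSemidef_conjTranspose_mul_self _

/-- Kronecker product of vectors. -/
def vecKron {m n : Type*} (y : m → ℂ) (z : n → ℂ) : m × n → ℂ := fun p => y p.1 * z p.2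

lemma kron_mulVec {m n : Type*} [Fintype m] [Fintype n] (A : Matrix m m ℂ) (B : Matrix n n ℂ)
    (y : m → ℂ) (z : n → ℂ) :
    (A ⊗ₖ B) *ᵥ vecKron y z = vecKron (A *ᵥ y) (B *ᵥ z) := by
  ext ⟨i, k⟩
  simp only [mulVec, dotProduct, vecKron, Fintype.sum_prod_type, kroneckerMap_apply]
  rw [Finset.sum_mul_sum]
  congr 1; ext i'; congr 1; ext k'; ring

lemma sum_mulVec {m n ι : Type*} [Fintype n] (s : Finset ι) (A : ι → Matrix m n ℂ) (x : n → ℂ) :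
    (∑ j ∈ s, A j) *ᵥ x = ∑ j ∈ s, A j *ᵥ x := by
  ext i
  simp only [mulVec, dotProduct, Matrix.sum_apply, Finset.sum_apply, Finset.sum_mul]
  rw [Finset.sum_comm]

/-- Partial trace over the second tensor factor. -/
noncomputable def trV {m n : Type*} [Fintype n] (ρ : Matrix (m × n) (m × n) ℂ) :
    Matrix m m ℂ :=
  fun i i' => ∑ j, ρ (i, j) (i', j)

/-- Partial trace over the first tensor factor. -/
noncomputable def trU {m n : Type*} [Fintype m] (ρ : Matrix (m × n) (m × n) ℂ) :
    Matrix n n ℂ :=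
  fun j j' => ∑ i, ρ (i, j) (i, j')

theorem separable_rank_reduced_le (m n M : ℕ)
    (p : Fin M → ℝ)
    (σ : Fin M → Matrix (Fin m) (Fin m) ℂ)
    (τ : Fin M → Matrix (Fin n) (Fin n) ℂ)
    (hp : ∀ j, 0 < p j) (hpsum : ∑ j, p j = 1)
    (hσ : ∀ j, (σ j).PosSemidef) (hστr : ∀ j, (σ j).trace = 1)
    (hτ : ∀ j, (τ j).PosSemidef) (hτtr : ∀ j, (τ j).trace = 1)
    (ρ : Matrix (Fin m × Fin n) (Fin m × Fin n) ℂ)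
    (hρ : ρ = ∑ j, (p j : ℂ) • (σ j ⊗ₖ τ j)) :
    (trV ρ).rank ≤ ρ.rank := by
  classical
  -- choose a vector not killed by each τ j
  have hu : ∀ j, ∃ v : Fin n → ℂ, τ j *ᵥ v ≠ 0 := by
    intro j
    by_contra h
    push_neg at h
    have hz : τ j = 0 := by
      ext i k
      have := congrFun (h (Pi.single k 1)) i
      simpa [mulVec_single] using this
    have : (τ j).trace = 0 := by simp [hz]
    rw [hτtr j] at this
    exact one_ne_zero this
  choose v hv using hu
  set u : Fin M → Fin n → ℂ := fun j => τ j *ᵥ v j with hudef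
  -- trV ρ = ∑ j, p j • σ j
  have htrV : trV ρ = ∑ j, (p j : ℂ) • σ j := by
    ext i i'
    simp only [trV, hρ, Matrix.sum_apply, Matrix.smul_apply, kroneckerMap_apply, smul_eq_mul]
    rw [Finset.sum_comm]
    refine Finset.sum_congr rfl fun j _ => ?_
    have : ∑ k, p j * (σ j i i' * τ j k k) = (p j : ℂ) * σ j i i' * (τ j).trace := by
      rw [Matrix.trace]
      simp only [Matrix.diag]
      rw [Finset.mul_sum]
      congr 1; ext k; ring
    rw [this, hτtr j, mul_one]
  -- kernel fact
  have hker : ∀ x : Fin m × Fin n → ℂ, ρ *ᵥ x = 0 → ∀ j, (σ j ⊗ₖ τ j) *ᵥ x = 0 := by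
    intro x hx j
    have h0 : star x ⬝ᵥ ρ *ᵥ x = 0 := by rw [hx, dotProduct_zero]
    rw [hρ, _root_.sum_mulVec] at h0
    have hexp : star x ⬝ᵥ (∑ j, (p j : ℂ) • (σ j ⊗ₖ τ j) *ᵥ x)
        = ∑ j, (p j : ℂ) * (star x ⬝ᵥ (σ j ⊗ₖ τ j) *ᵥ x) := by
      simp [dotProduct, Finset.sum_apply, Finset.mul_sum, Finset.sum_mul]
      rw [Finset.sum_comm]
      refine Finset.sum_congr rfl fun j _ => Finset.sum_congr rfl fun i _ => ?_
      ring
    simp only [smul_mulVec] at h0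
    rw [hexp] at h0
    have hnn : ∀ j ∈ Finset.univ, (0:ℂ) ≤ (p j : ℂ) * (star x ⬝ᵥ (σ j ⊗ₖ τ j) *ᵥ x) := by
      intro j _
      have h1 : (0:ℂ) ≤ (p j : ℂ) := by
        rw [Complex.zero_le_real]
        exact (hp j).le
      exact mul_nonneg h1 ((kron_posSemidef (hσ j) (hτ j)).dotProduct_mulVec_nonneg x)
    have := (Finset.sum_eq_zero_iff_of_nonneg hnn).mp h0 j (Finset.mem_univ j)
    have hpne : (p j : ℂ) ≠ 0 := by
      simpa using (hp j).ne'
    have ht0 : star x ⬝ᵥ (σ j ⊗ₖ τ j) *ᵥ x = 0 := by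
      rcases mul_eq_zero.mp this with h | h
      · exact absurd h hpne
      · exact h
    exact ((kron_posSemidef (hσ j) (hτ j)).dotProduct_mulVec_zero_iff x).mp ht0
  -- the subspace S spanned by ranges of σ j
  set S : Submodule ℂ (Fin m → ℂ) := ⨆ j, LinearMap.range (σ j).mulVecLin with hS
  have hrange : LinearMap.range (trV ρ).mulVecLin ≤ S := by
    rintro y ⟨x, rfl⟩
    rw [Matrix.mulVecLin_apply, htrV, _root_.sum_mulVec]
    refine Submodule.sum_mem S fun j _ => ?_
    rw [smul_mulVec]
    refine Submodule.smul_mem S _ ?_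
    exact le_iSup (fun j => LinearMap.range (σ j).mulVecLin) j ⟨x, rfl⟩
  -- spanning set of columns
  set T : Set (Fin m → ℂ) := ⋃ j, Set.range (σ j)ᵀ with hT
  have hST : S = Submodule.span ℂ T := by
    rw [hT, Submodule.span_iUnion]
    rw [hS]
    simp_rw [Matrix.range_mulVecLin]
    rfl
  obtain ⟨s, hsT, hsspan, hsind⟩ := exists_linearIndependent ℂ T
  have hsfin : s.Finite := hsind.setFinite
  haveI := hsfin.fintype
  -- column data: each b ∈ s is a column of some σ j
  have hcol : ∀ b : s, ∃ (j : Fin M) (i : Fin m), σ j *ᵥ Pi.single i 1 = (b : Fin m → ℂ) := by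
    rintro ⟨b, hb⟩
    obtain ⟨_, ⟨j, rfl⟩, i, rfl⟩ := hsT hb
    exact ⟨j, i, by ext k; simp [mulVec_single, transpose_apply]⟩
  choose jb ib hjb using hcol
  -- the tensored family
  set W : s → (Fin m × Fin n → ℂ) := fun b => vecKron (b : Fin m → ℂ) (u (jb b)) with hW
  -- each W b is orthogonal to ker ρ
  have horth : ∀ (b : s) (x : Fin m × Fin n → ℂ), ρ *ᵥ x = 0 → star x ⬝ᵥ W b = 0 := by
    intro b x hx
    have hWb : W b = (σ (jb b) ⊗ₖ τ (jb b)) *ᵥ vecKron (Pi.single (ib b) 1) (v (jb b)) := by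
      rw [hW, kron_mulVec, hjb b]
    rw [hWb, dotProduct_mulVec]
    have hherm : (σ (jb b) ⊗ₖ τ (jb b))ᴴ = σ (jb b) ⊗ₖ τ (jb b) :=
      (kron_posSemidef (hσ _) (hτ _)).1
    have : star x ᵥ* (σ (jb b) ⊗ₖ τ (jb b)) = 0 := by
      have := star_mulVec (σ (jb b) ⊗ₖ τ (jb b)) x
      rw [hker x hx (jb b)] at this
      rw [hherm] at this
      rw [← this]
      simp
    rw [this, zero_dotProduct]
  -- W is linearly independent
  have hWind : LinearIndependent ℂ W := by
    rw [Fintype.linearIndependent_iff]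
    intro g hg b
    have hcoord : ∀ k : Fin n, ∑ b' : s, (g b' * u (jb b') k) • (b' : Fin m → ℂ) = 0 := by
      intro k
      ext i
      have := congrFun hg (i, k)
      simpa [hW, vecKron, Finset.sum_apply, mul_assoc, mul_comm, mul_left_comm] using this
    have hgk : ∀ k : Fin n, g b * u (jb b) k = 0 := by
      intro k
      exact (Fintype.linearIndependent_iff.mp hsind) _ (hcoord k) b
    have : u (jb b) ≠ 0 := hv (jb b)
    obtain ⟨k, hk⟩ := Function.ne_iff.mp this
    have := hgk k
    rcases mul_eq_zero.mp this with h | h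
    · exact h
    · exact absurd h hk
  -- the span of W
  set U : Submodule ℂ (Fin m × Fin n → ℂ) := Submodule.span ℂ (Set.range W) with hU
  have hUorth : ∀ y ∈ U, ∀ x : Fin m × Fin n → ℂ, ρ *ᵥ x = 0 → star x ⬝ᵥ y = 0 := by
    intro y hy
    induction hy using Submodule.span_induction with
    | mem y hy =>
      obtain ⟨b, rfl⟩ := hy
      exact horth b
    | zero => intro x _; simp
    | add y z _ _ hy hz => intro x hx; rw [dotProduct_add, hy x hx, hz x hx, add_zero]
    | smul c y _ hy => intro x hx; rw [dotProduct_smul, hy x hx, smul_zero]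
  have hdisj : Disjoint U (LinearMap.ker ρ.mulVecLin) := by
    rw [Submodule.disjoint_def]
    intro y hyU hyK
    have hy0 : ρ *ᵥ y = 0 := hyK
    have := hUorth y hyU y hy0
    exact (dotProduct_star_self_eq_zero).mp this
  -- dimension count
  have hcard1 : Module.finrank ℂ U = Fintype.card s := finrank_span_eq_card hWind
  have hcard2 : Module.finrank ℂ S = Fintype.card s := by
    rw [hST, ← hsspan]
    rw [finrank_span_set_eq_card hsind]
    rw [Set.toFinset_card]
  have hsum : Module.finrank ℂ U + Module.finrank ℂ (LinearMap.ker ρ.mulVecLin)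
      ≤ Module.finrank ℂ (Fin m × Fin n → ℂ) :=
    Submodule.finrank_add_finrank_le_of_disjoint hdisj
  have hrn : Module.finrank ℂ (LinearMap.range ρ.mulVecLin)
      + Module.finrank ℂ (LinearMap.ker ρ.mulVecLin)
      = Module.finrank ℂ (Fin m × Fin n → ℂ) :=
    LinearMap.finrank_range_add_finrank_ker ρ.mulVecLin
  have h1 : (trV ρ).rank ≤ Module.finrank ℂ S := Submodule.finrank_mono hrange
  have h2 : Module.finrank ℂ U ≤ ρ.rank := by
    unfold Matrix.rank
    omega
  rw [hcard2, ← hcard1] at h1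
  exact le_trans h1 h2
end

section
/- If a density matrix ρ on ℂ^m ⊗ ℂ^n is separable as ρ = Σ_{j=1}^M p_j (σ_j ⊗ τ_j), then both rank(Tr_V ρ) ≤ rank(ρ) and rank(Tr_U ρ) ≤ rank(ρ). -/
open ComplexOrder Matrix Kronecker

lemma aux_sum_mulVec {k : Type*} [Fintype k] {M : ℕ} (A : Fin M → Matrix k k ℂ) (x : k → ℂ) :
    (∑ j, A j) *ᵥ x = ∑ j, (A j) *ᵥ x := by
  induction (Finset.univ : Finset (Fin M)) using Finset.induction_on with
  | empty => simp [Matrix.zero_mulVec]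
  | insert _ _ h ih => simp [Finset.sum_insert h, Matrix.add_mulVec, ih]

lemma aux_dot_sum {k : Type*} [Fintype k] {M : ℕ} (u : k → ℂ) (v : Fin M → k → ℂ) :
    u ⬝ᵥ (∑ j, v j) = ∑ j, u ⬝ᵥ v j := by
  simp only [dotProduct, Finset.sum_apply, Finset.mul_sum]
  exact Finset.sum_comm

lemma aux_mulVec_sum_smul_eq_zero_iff {k : Type*} [Fintype k] {M : ℕ}
    (A : Fin M → Matrix k k ℂ)
    (hA : ∀ j, (A j).PosSemidef) (c : Fin M → ℂ) (hc : ∀ j, 0 < c j) (x : k → ℂ) :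
    (∑ j, c j • A j) *ᵥ x = 0 ↔ ∀ j, (A j) *ᵥ x = 0 := by
  constructor
  · intro h
    have hq : ∑ j, c j * (star x ⬝ᵥ (A j) *ᵥ x) = 0 := by
      have h2 := congrArg (fun v => star x ⬝ᵥ v) h
      simp only [aux_sum_mulVec, Matrix.smul_mulVec, dotProduct_zero] at h2
      rw [aux_dot_sum] at h2
      simpa [dotProduct_smul, smul_eq_mul] using h2
    intro j
    have hterm : ∀ i ∈ Finset.univ, (0:ℂ) ≤ c i * (star x ⬝ᵥ (A i) *ᵥ x) :=
      fun i _ => mul_nonneg (hc i).le ((hA i).dotProduct_mulVec_nonneg x)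
    have h3 := (Finset.sum_eq_zero_iff_of_nonneg hterm).mp hq j (Finset.mem_univ j)
    have h4 : star x ⬝ᵥ (A j) *ᵥ x = 0 := by
      rcases mul_eq_zero.mp h3 with h' | h'
      · exact absurd h' (hc j).ne'
      · exact h'
    exact ((hA j).dotProduct_mulVec_zero_iff x).mp h4
  · intro h
    rw [aux_sum_mulVec]
    simp [Matrix.smul_mulVec, h]

lemma aux_rank_eq_of_ker_eq {k : Type*} [Fintype k] [DecidableEq k]
    (A B : Matrix k k ℂ)
    (h : LinearMap.ker A.mulVecLin = LinearMap.ker B.mulVecLin) : A.rank = B.rank := by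
  have hA := LinearMap.finrank_range_add_finrank_ker A.mulVecLin
  have hB := LinearMap.finrank_range_add_finrank_ker B.mulVecLin
  rw [h] at hA
  unfold Matrix.rank
  omega

lemma aux_exists_mulVec_ne_zero {k : Type*} [Fintype k] [DecidableEq k] {M : ℕ}
    (τ : Fin M → Matrix k k ℂ)
    (hτ : ∀ j, τ j ≠ 0) : ∃ y : k → ℂ, ∀ j, (τ j) *ᵥ y ≠ 0 := by
  by_contra h
  push_neg at h
  have hcov : ⋃ j, ((LinearMap.ker (τ j).mulVecLin : Submodule ℂ (k → ℂ)) :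
      Set (k → ℂ)) = Set.univ := by
    ext y
    simp only [Set.mem_iUnion, Set.mem_univ, iff_true, SetLike.mem_coe, LinearMap.mem_ker,
      Matrix.mulVecLin_apply]
    exact h y
  obtain ⟨j, hj⟩ := Subspace.exists_eq_top_of_iUnion_eq_univ hcov
  apply hτ j
  have h0 : (τ j).mulVecLin = 0 := LinearMap.ker_eq_top.mp hj
  ext i i'
  have := congrFun (congrFun (congrArg DFunLike.coe h0) (Pi.single i' 1)) i
  simpa [Matrix.mulVecLin_apply, Matrix.mulVec_single] using this

lemma aux_compressV {m n : ℕ} (σ : Matrix (Fin m) (Fin m) ℂ) (τ : Matrix (Fin n) (Fin n) ℂ)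
    (y : Fin n → ℂ) :
    (Matrix.of fun (q : Fin m × Fin n) (i : Fin m) => if q.1 = i then y q.2 else 0)ᴴ *
      ((σ ⊗ₖ τ) * (Matrix.of fun (q : Fin m × Fin n) (i : Fin m) => if q.1 = i then y q.2 else 0))
      = (star y ⬝ᵥ τ *ᵥ y) • σ := by
  ext i i'
  simp only [Matrix.mul_apply, conjTranspose_apply, Matrix.of_apply, kroneckerMap_apply,
    Fintype.sum_prod_type, Matrix.smul_apply, smul_eq_mul, dotProduct, mulVec, star_apply,
    mul_ite, mul_zero, ite_mul, zero_mul, Finset.sum_ite_eq', Finset.mem_univ, if_true,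
    apply_ite (star : ℂ → ℂ), star_zero, Finset.sum_ite_irrel, Finset.sum_const_zero,
    Finset.mul_sum, Finset.sum_mul]
  refine Finset.sum_congr rfl fun l _ => Finset.sum_congr rfl fun l' _ => ?_
  simp only [Pi.star_apply]
  ring

lemma aux_compressU {m n : ℕ} (σ : Matrix (Fin m) (Fin m) ℂ) (τ : Matrix (Fin n) (Fin n) ℂ)
    (z : Fin m → ℂ) :
    (Matrix.of fun (q : Fin m × Fin n) (j : Fin n) => if q.2 = j then z q.1 else 0)ᴴ *
      ((σ ⊗ₖ τ) * (Matrix.of fun (q : Fin m × Fin n) (j : Fin n) => if q.2 = j then z q.1 else 0))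
      = (star z ⬝ᵥ σ *ᵥ z) • τ := by
  ext j j'
  simp only [Matrix.mul_apply, conjTranspose_apply, Matrix.of_apply, kroneckerMap_apply,
    Fintype.sum_prod_type, Matrix.smul_apply, smul_eq_mul, dotProduct, mulVec, star_apply,
    mul_ite, mul_zero, ite_mul, zero_mul, Finset.sum_ite_eq', Finset.mem_univ, if_true,
    apply_ite (star : ℂ → ℂ), star_zero, Finset.sum_ite_irrel, Finset.sum_const_zero,
    Finset.mul_sum, Finset.sum_mul]
  refine Finset.sum_congr rfl fun l _ => Finset.sum_congr rfl fun l' _ => ?_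
  simp only [Pi.star_apply]
  ring

theorem separable_rank_both_reduced_le (m n M : ℕ)
    (p : Fin M → ℝ)
    (σ : Fin M → Matrix (Fin m) (Fin m) ℂ)
    (τ : Fin M → Matrix (Fin n) (Fin n) ℂ)
    (hp : ∀ j, 0 < p j) (hpsum : ∑ j, p j = 1)
    (hσ : ∀ j, (σ j).PosSemidef) (hστr : ∀ j, (σ j).trace = 1)
    (hτ : ∀ j, (τ j).PosSemidef) (hτtr : ∀ j, (τ j).trace = 1)
    (ρ : Matrix (Fin m × Fin n) (Fin m × Fin n) ℂ)
    (hρ : ρ = ∑ j, (p j : ℂ) • (σ j ⊗ₖ τ j)) :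
    (trV ρ).rank ≤ ρ.rank ∧ (trU ρ).rank ≤ ρ.rank := by
  classical
  have htrV : trV ρ = ∑ j, (p j : ℂ) • σ j := by
    ext i i'
    simp only [trV, hρ, Matrix.sum_apply, Matrix.smul_apply, Matrix.kroneckerMap_apply,
      smul_eq_mul]
    rw [Finset.sum_comm]
    refine Finset.sum_congr rfl fun j _ => ?_
    rw [← Finset.mul_sum, ← Finset.mul_sum,
      show (∑ l, τ j l l) = 1 by simpa [Matrix.trace, Matrix.diag] using hτtr j, mul_one]
  have htrU : trU ρ = ∑ j, (p j : ℂ) • τ j := by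
    ext l l'
    simp only [trU, hρ, Matrix.sum_apply, Matrix.smul_apply, Matrix.kroneckerMap_apply,
      smul_eq_mul]
    rw [Finset.sum_comm]
    refine Finset.sum_congr rfl fun j _ => ?_
    rw [← Finset.mul_sum, ← Finset.sum_mul,
      show (∑ i, σ j i i) = 1 by simpa [Matrix.trace, Matrix.diag] using hστr j, one_mul]
  have hppos : ∀ j, (0:ℂ) < (p j : ℂ) := fun j => by
    exact Complex.zero_lt_real.mpr (hp j)
  constructor
  · -- trV
    have hτne : ∀ j, τ j ≠ 0 := by
      intro j h
      have := hτtr j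
      rw [h] at this
      simp at this
    obtain ⟨y, hy⟩ := aux_exists_mulVec_ne_zero τ hτne
    set E : Matrix (Fin m × Fin n) (Fin m) ℂ :=
      Matrix.of fun (q : Fin m × Fin n) (i : Fin m) => if q.1 = i then y q.2 else 0 with hE
    have hdotpos : ∀ j, (0:ℂ) < star y ⬝ᵥ (τ j) *ᵥ y := by
      intro j
      refine lt_of_le_of_ne ((hτ j).dotProduct_mulVec_nonneg y) ?_
      intro h0
      exact hy j (((hτ j).dotProduct_mulVec_zero_iff y).mp h0.symm)
    have hEρ : Eᴴ * ρ * E = ∑ j, ((p j : ℂ) * (star y ⬝ᵥ (τ j) *ᵥ y)) • σ j := by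
      rw [hρ, Matrix.mul_sum, Matrix.sum_mul]
      refine Finset.sum_congr rfl fun j _ => ?_
      rw [Matrix.mul_smul, Matrix.smul_mul, Matrix.mul_assoc, aux_compressV, smul_smul]
    have hker : LinearMap.ker (trV ρ).mulVecLin = LinearMap.ker (Eᴴ * ρ * E).mulVecLin := by
      ext x
      simp only [LinearMap.mem_ker, Matrix.mulVecLin_apply, htrV, hEρ]
      rw [aux_mulVec_sum_smul_eq_zero_iff σ hσ _ hppos x,
        aux_mulVec_sum_smul_eq_zero_iff σ hσ _ (fun j => mul_pos (hppos j) (hdotpos j)) x]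
    rw [aux_rank_eq_of_ker_eq _ _ hker]
    calc (Eᴴ * ρ * E).rank = (Eᴴ * (ρ * E)).rank := by rw [Matrix.mul_assoc]
      _ ≤ (ρ * E).rank := Matrix.rank_mul_le_right _ _
      _ ≤ ρ.rank := Matrix.rank_mul_le_left _ _
  · -- trU
    have hσne : ∀ j, σ j ≠ 0 := by
      intro j h
      have := hστr j
      rw [h] at this
      simp at this
    obtain ⟨z, hz⟩ := aux_exists_mulVec_ne_zero σ hσne
    set F : Matrix (Fin m × Fin n) (Fin n) ℂ :=
      Matrix.of fun (q : Fin m × Fin n) (j : Fin n) => if q.2 = j then z q.1 else 0 with hF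
    have hdotpos : ∀ j, (0:ℂ) < star z ⬝ᵥ (σ j) *ᵥ z := by
      intro j
      refine lt_of_le_of_ne ((hσ j).dotProduct_mulVec_nonneg z) ?_
      intro h0
      exact hz j (((hσ j).dotProduct_mulVec_zero_iff z).mp h0.symm)
    have hFρ : Fᴴ * ρ * F = ∑ j, ((p j : ℂ) * (star z ⬝ᵥ (σ j) *ᵥ z)) • τ j := by
      rw [hρ, Matrix.mul_sum, Matrix.sum_mul]
      refine Finset.sum_congr rfl fun j _ => ?_
      rw [Matrix.mul_smul, Matrix.smul_mul, Matrix.mul_assoc, aux_compressU, smul_smul]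
    have hker : LinearMap.ker (trU ρ).mulVecLin = LinearMap.ker (Fᴴ * ρ * F).mulVecLin := by
      ext x
      simp only [LinearMap.mem_ker, Matrix.mulVecLin_apply, htrU, hFρ]
      rw [aux_mulVec_sum_smul_eq_zero_iff τ hτ _ hppos x,
        aux_mulVec_sum_smul_eq_zero_iff τ hτ _ (fun j => mul_pos (hppos j) (hdotpos j)) x]
    rw [aux_rank_eq_of_ker_eq _ _ hker]
    calc (Fᴴ * ρ * F).rank = (Fᴴ * (ρ * F)).rank := by rw [Matrix.mul_assoc]
      _ ≤ (ρ * F).rank := Matrix.rank_mul_le_right _ _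
      _ ≤ ρ.rank := Matrix.rank_mul_le_left _ _
end
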